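/- In the 3-player game H3(u) with u > 0, on actions {G,⊥} with payoffs (G,G,G)→(2u,−u,−u), (G,G,⊥)→(0,0,0), (G,⊥,G)→(0,0,0), (G,⊥,⊥)→(1,1,1), (⊥,G,G)→(0,0,0), (⊥,G,⊥)→(1,1,1), (⊥,⊥,G)→(1,1,1), (⊥,⊥,⊥)→(2,2,2), the only Nash equilibrium is the pure strategy profile (⊥,⊥,⊥); and when u = 0 the only Nash equilibria are (G,G,G) and (⊥,⊥,⊥). -/
import Mathlib


open Set

/-- Expected payoff in a 3-player game where each player has two actions
(`true` = G, `false` = ⊥), given the probabilities `p q r` of playing G. -/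
noncomputable def exp3 (f : Bool → Bool → Bool → ℝ) (p q r : ℝ) : ℝ :=
  p*q*r * f true true true + p*q*(1-r) * f true true false +
  p*(1-q)*r * f true false true + p*(1-q)*(1-r) * f true false false +
  (1-p)*q*r * f false true true + (1-p)*q*(1-r) * f false true false +
  (1-p)*(1-q)*r * f false false true + (1-p)*(1-q)*(1-r) * f false false false

/-- Payoff to player `i` in the game H3(u); `true` = G, `false` = ⊥. -/
noncomputable def H3 (u : ℝ) (i : Fin 3) (a b c : Bool) : ℝ :=
  match a, b, c with
  | true,  true,  true  => ![2*u, -u, -u] i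
  | true,  true,  false => ![0, 0, 0] i
  | true,  false, true  => ![0, 0, 0] i
  | true,  false, false => ![1, 1, 1] i
  | false, true,  true  => ![0, 0, 0] i
  | false, true,  false => ![1, 1, 1] i
  | false, false, true  => ![1, 1, 1] i
  | false, false, false => ![2, 2, 2] i

/-- `(p,q,r)` is a (mixed) Nash equilibrium of H3(u). -/
def H3NE (u p q r : ℝ) : Prop :=
  p ∈ Icc (0:ℝ) 1 ∧ q ∈ Icc (0:ℝ) 1 ∧ r ∈ Icc (0:ℝ) 1 ∧
  (∀ p' ∈ Icc (0:ℝ) 1, exp3 (H3 u 0) p' q r ≤ exp3 (H3 u 0) p q r) ∧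
  (∀ q' ∈ Icc (0:ℝ) 1, exp3 (H3 u 1) p q' r ≤ exp3 (H3 u 1) p q r) ∧
  (∀ r' ∈ Icc (0:ℝ) 1, exp3 (H3 u 2) p q r' ≤ exp3 (H3 u 2) p q r)

lemma e0 (u p q r : ℝ) : exp3 (H3 u 0) p q r = p*q*r*(2*u) + p*(1-q)*(1-r) + (1-p)*q*(1-r) + (1-p)*(1-q)*r + (1-p)*(1-q)*(1-r)*2 := by
  simp [exp3, H3]
lemma e1 (u p q r : ℝ) : exp3 (H3 u 1) p q r = p*q*r*(-u) + p*(1-q)*(1-r) + (1-p)*q*(1-r) + (1-p)*(1-q)*r + (1-p)*(1-q)*(1-r)*2 := by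
  simp [exp3, H3]
lemma e2 (u p q r : ℝ) : exp3 (H3 u 2) p q r = p*q*r*(-u) + p*(1-q)*(1-r) + (1-p)*q*(1-r) + (1-p)*(1-q)*r + (1-p)*(1-q)*(1-r)*2 := by
  simp [exp3, H3]

lemma bbb_ne (u : ℝ) (hu : 0 ≤ u) : H3NE u 0 0 0 := by
  refine ⟨by norm_num, by norm_num, by norm_num, ?_, ?_, ?_⟩ <;>
    intro x hx <;> simp only [e0, e1, e2] <;> obtain ⟨h1, h2⟩ := hx <;> nlinarith

lemma ggg_ne : H3NE 0 1 1 1 := by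
  refine ⟨by norm_num, by norm_num, by norm_num, ?_, ?_, ?_⟩ <;>
    intro x hx <;> simp only [e0, e1, e2] <;> ring_nf <;> norm_num

/-- For u > 0 the only Nash equilibrium of H3(u) is (⊥,⊥,⊥); for u = 0 the only
Nash equilibria are (G,G,G) and (⊥,⊥,⊥). -/
theorem stmt6 :
    (∀ u : ℝ, 0 < u → ∀ p q r : ℝ, (H3NE u p q r ↔ p = 0 ∧ q = 0 ∧ r = 0)) ∧
    (∀ p q r : ℝ,
      H3NE 0 p q r ↔ (p = 0 ∧ q = 0 ∧ r = 0) ∨ (p = 1 ∧ q = 1 ∧ r = 1)) := by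
  constructor
  · intro u hu p q r
    constructor
    · rintro ⟨⟨hp0, hp1⟩, ⟨hq0, hq1⟩, ⟨hr0, hr1⟩, h0, h1, h2⟩
      have H1 := h1 0 (by norm_num)
      rw [e1, e1] at H1
      have hpr1 : p * r ≤ 1 := by nlinarith
      have hslope : p * r * (1 - u) < 1 := by
        rcases lt_or_eq_of_le hpr1 with h | h
        · nlinarith [mul_nonneg (mul_nonneg hp0 hr0) hu.le]
        · rw [h]; linarith
      have hq : q = 0 := le_antisymm (by nlinarith) hq0
      subst hq
      have H2 := h2 0 (by norm_num)
      rw [e2, e2] at H2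
      have hr : r = 0 := by nlinarith
      subst hr
      have H0 := h0 0 (by norm_num)
      rw [e0, e0] at H0
      have hp : p = 0 := by nlinarith
      exact ⟨hp, rfl, rfl⟩
    · rintro ⟨hp, hq, hr⟩; subst hp; subst hq; subst hr; exact bbb_ne u hu.le
  · intro p q r
    constructor
    · rintro ⟨⟨hp0, hp1⟩, ⟨hq0, hq1⟩, ⟨hr0, hr1⟩, h0, h1, h2⟩
      have H0 := h0 0 (by norm_num)
      rw [e0, e0] at H0
      have H1 := h1 0 (by norm_num)
      rw [e1, e1] at H1
      have H2 := h2 0 (by norm_num)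
      rw [e2, e2] at H2
      -- H0 : p*(q*r-1) ≥ 0, H1 : q*(p*r-1) ≥ 0, H2 : r*(p*q-1) ≥ 0 (up to ring)
      by_cases hp : p = 0
      · subst hp
        left
        have hq : q = 0 := by nlinarith
        subst hq
        have hr : r = 0 := by nlinarith
        exact ⟨rfl, rfl, hr⟩
      · right
        have hpp : 0 < p := lt_of_le_of_ne hp0 (Ne.symm hp)
        have hqr : 1 ≤ q * r := by nlinarith
        have hq : q = 1 := by nlinarith
        have hr : r = 1 := by nlinarith
        subst hq; subst hr
        have hp1' : p = 1 := by nlinarith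
        exact ⟨hp1', rfl, rfl⟩
    · rintro (⟨hp, hq, hr⟩ | ⟨hp, hq, hr⟩) <;> subst hp <;> subst hq <;> subst hr
      · exact bbb_ne 0 le_rfl
      · exact ggg_ne
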